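/- Consider the bilinear system z_{k+1} = A z_k + B u_k + H (z_k ⊗ u_k) and a T-long data trajectory (u^d, z^d) satisfying the dynamics, with v^d_k = z^d_k ⊗ u^d_k. For any g ∈ ℝ^{T−L+1}, define z_{[1,L+1]} = Z_{1,L+1,T−L+1} g, u_{[1,L]} = U_{1,L,T−L+1} g, and v_{[1,L]} = V_{1,L,T−L+1} g. If additionally v_i = z_i ⊗ u_i for all i = 1,…,L, then (u, z) is a valid length-L trajectory of the bilinear system: z_{i+1} = A z_i + B u_i + H (z_i ⊗ u_i) for i = 1,…,L. -/
import Mathlib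


open Matrix

/-- Kronecker product of two vectors. -/
def kron {n m : ℕ} (z : Fin n → ℝ) (u : Fin m → ℝ) : Fin n × Fin m → ℝ :=
  fun p => z p.1 * u p.2

/-- Depth-`L` Hankel matrix with `C` columns of a `T`-long vector-valued signal. -/
def hankel {α : Type} {T : ℕ} (L C : ℕ) (h : L + C ≤ T + 1) (w : Fin T → α → ℝ) :
    Matrix (Fin L × α) (Fin C) ℝ :=
  fun p j => w ⟨p.1.val + j.val, by have := p.1.isLt; have := j.isLt; omega⟩ p.2

/-- bilinear Fundamental Lemma, direction (ii): any `g` whose induced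
`v`-trajectory is Kronecker-consistent with the induced `z`- and `u`-trajectories
yields a valid length-`L` trajectory of the bilinear system. -/
theorem bilinear_fundamental_lemma_ii {n m L T : ℕ} (hL : 1 ≤ L) (hLT : L ≤ T)
    (A : Matrix (Fin n) (Fin n) ℝ) (B : Matrix (Fin n) (Fin m) ℝ)
    (H : Matrix (Fin n) (Fin n × Fin m) ℝ)
    (ud : Fin T → Fin m → ℝ) (zd : Fin (T + 1) → Fin n → ℝ)
    (hdata : ∀ k : Fin T, zd k.succ =
      A *ᵥ zd k.castSucc + B *ᵥ ud k + H *ᵥ kron (zd k.castSucc) (ud k))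
    (g : Fin (T - L + 1) → ℝ)
    (hcompat : ∀ (i : Fin L) (pq : Fin n × Fin m),
      (hankel L (T - L + 1) (by omega)
          (fun k : Fin T => kron (zd k.castSucc) (ud k)) *ᵥ g) (i, pq) =
        (hankel (L + 1) (T - L + 1) (by omega) zd *ᵥ g) (i.castSucc, pq.1)
          * (hankel L (T - L + 1) (by omega) ud *ᵥ g) (i, pq.2)) :
    ∀ i : Fin L,
      (fun a : Fin n =>
          (hankel (L + 1) (T - L + 1) (by omega) zd *ᵥ g) (i.succ, a)) =
        A *ᵥ (fun a : Fin n =>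
            (hankel (L + 1) (T - L + 1) (by omega) zd *ᵥ g) (i.castSucc, a))
          + B *ᵥ (fun b : Fin m =>
            (hankel L (T - L + 1) (by omega) ud *ᵥ g) (i, b))
          + H *ᵥ kron
            (fun a : Fin n =>
              (hankel (L + 1) (T - L + 1) (by omega) zd *ᵥ g) (i.castSucc, a))
            (fun b : Fin m =>
              (hankel L (T - L + 1) (by omega) ud *ᵥ g) (i, b)) := by
  intro i
  have hc : kron
      (fun a : Fin n => (hankel (L + 1) (T - L + 1) (by omega) zd *ᵥ g) (i.castSucc, a))
      (fun b : Fin m => (hankel L (T - L + 1) (by omega) ud *ᵥ g) (i, b)) =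
      fun pq => (hankel L (T - L + 1) (by omega)
          (fun k : Fin T => kron (zd k.castSucc) (ud k)) *ᵥ g) (i, pq) := by
    funext pq
    exact (hcompat i pq).symm
  rw [hc]
  funext a
  simp only [Pi.add_apply, mulVec, dotProduct, hankel, kron, Finset.mul_sum]
  conv_rhs =>
    rw [Finset.sum_comm]
    rw [Finset.sum_comm (γ := Fin m)]
    rw [Finset.sum_comm (γ := Fin n × Fin m)]
  rw [← Finset.sum_add_distrib, ← Finset.sum_add_distrib]
  refine Finset.sum_congr rfl fun j _ => ?_
  have := congrFun (hdata ⟨i.val + j.val, by omega⟩) a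
  simp only [Pi.add_apply, mulVec, dotProduct, kron] at this
  have hidx : (⟨(i.succ).val + j.val, by have := i.isLt; have := j.isLt; omega⟩ : Fin (T+1)) =
      (⟨i.val + j.val, by omega⟩ : Fin T).succ := by
    ext; simp [Fin.succ]; omega
  rw [hidx, this]
  have hidx2 : ∀ (h1 h2), (⟨(i.castSucc).val + j.val, h1⟩ : Fin (T+1)) =
      ((⟨i.val + j.val, h2⟩ : Fin T).castSucc) := by
    intro h1 h2; ext; simp
  rw [add_mul, add_mul, Finset.sum_mul, Finset.sum_mul]
  congr 1
  · congr 1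
    · exact Finset.sum_congr rfl fun b _ => by rw [hidx2 (by omega) (by omega)]; ring
    · exact Finset.sum_congr rfl fun b _ => by ring
  · rw [Finset.sum_mul]; exact Finset.sum_congr rfl fun pq _ => by ring
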